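/- Let G be a finite abelian group, n and m positive integers, μ a probability measure on G, and s_1, …, s_{n+m} ∈ G. Define probability measures μ_i on G by μ_i(x) = μ(s_i·x). Let P be the probability, under the product measure μ_1 ⊗ ⋯ ⊗ μ_{n+m} on G^{n+m}, of the event that the set {x_1, …, x_{n+m}} has at most n distinct elements. Then P ≤ C(n,m) · ((Σ_{χ∈Ĝ} |μ̂(χ)|) / |G|)^m, where C(n,m) is the number of partitions of {1, …, n+m} into exactly n non-empty blocks (a constant depending only on n and m). -/
import Mathlib


open scoped Classical

/-- The Fourier transform of a (real-valued) measure `μ` on a finite abelian group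
`G`, evaluated at a character `χ` (for finite `G`, characters of `G` are exactly the
monoid homomorphisms `G →* ℂ`): `μ̂(χ) = ∑_{g ∈ G} conj (χ g) * μ g`. -/
noncomputable def fourierTransform {G : Type*} [CommGroup G] [Fintype G]
    (μ : G → ℝ) (χ : G →* ℂ) : ℂ :=
  ∑ g : G, (starRingEnd ℂ) (χ g) * (μ g : ℂ)

section Chars
variable {G : Type*} [CommGroup G] [Fintype G]

/-- equivalence between characters and unit-valued characters -/
def charUnitsEquiv (G : Type*) [CommGroup G] : (G →* ℂ) ≃ (G →* ℂˣ) where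
  toFun := MonoidHom.toHomUnits
  invFun ψ := (Units.coeHom ℂ).comp ψ
  left_inv f := by ext g; rfl
  right_inv ψ := by ext g; rfl

instance : HasEnoughRootsOfUnity ℂ (Monoid.exponent G) := by
  have : NeZero ((Monoid.exponent G : ℂ)) :=
    ⟨by exact_mod_cast Monoid.exponent_ne_zero_of_finite (G := G)⟩
  infer_instance

noncomputable instance : Fintype (G →* ℂˣ) :=
  Fintype.ofEquiv G (CommGroup.monoidHom_mulEquiv_of_hasEnoughRootsOfUnity G ℂ).some.toEquiv.symm

noncomputable instance : Fintype (G →* ℂ) :=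
  Fintype.ofEquiv (G →* ℂˣ) (charUnitsEquiv G).symm

lemma card_chars : Fintype.card (G →* ℂ) = Fintype.card G := by
  rw [Fintype.card_congr (charUnitsEquiv G),
    Fintype.card_congr (CommGroup.monoidHom_mulEquiv_of_hasEnoughRootsOfUnity G ℂ).some.toEquiv]

lemma char_norm_one (χ : G →* ℂ) (g : G) : ‖χ g‖ = 1 := by
  have h : (χ g) ^ Fintype.card G = 1 := by
    rw [← map_pow, pow_card_eq_one, map_one]
  exact Complex.norm_eq_one_of_pow_eq_one h Fintype.card_ne_zero

lemma char_conj (χ : G →* ℂ) (g : G) : (starRingEnd ℂ) (χ g) = χ g⁻¹ := by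
  have h1 : χ g * χ g⁻¹ = 1 := by rw [← map_mul, mul_inv_cancel, map_one]
  rw [← Complex.inv_eq_conj (char_norm_one χ g)]
  exact inv_eq_of_mul_eq_one_right h1

lemma sum_chars (g : G) :
    ∑ χ : G →* ℂ, χ g = if g = 1 then (Fintype.card G : ℂ) else 0 := by
  split_ifs with hg
  · subst hg; simp [card_chars]
  · obtain ⟨φ, hφ⟩ := CommGroup.exists_apply_ne_one_of_hasEnoughRootsOfUnity G ℂ hg
    have key : ∑ χ : G →* ℂ, χ g = ∑ ψ : G →* ℂˣ, ((ψ g : ℂ)) :=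
      Fintype.sum_equiv (charUnitsEquiv G) _ _ (fun χ => rfl)
    have key2 : ∑ ψ : G →* ℂˣ, ((ψ g : ℂ)) = (φ g : ℂ) * ∑ ψ : G →* ℂˣ, ((ψ g : ℂ)) := by
      rw [Finset.mul_sum]
      exact Fintype.sum_equiv (Equiv.mulLeft φ⁻¹) _ _ (fun ψ => by
        simp [Units.val_mul, Units.val_inv_eq_inv_val, ← mul_assoc,
          mul_inv_cancel₀ (Units.ne_zero (φ g))])
    have hφ1 : (φ g : ℂ) ≠ 1 := fun h => hφ (Units.ext h)
    have : ((φ g : ℂ) - 1) * ∑ ψ : G →* ℂˣ, ((ψ g : ℂ)) = 0 := by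
      rw [sub_mul, one_mul, ← key2, sub_self]
    rw [key]
    rcases mul_eq_zero.mp this with h | h
    · exact absurd (by linear_combination h) hφ1
    · exact h

lemma mu_le_bound (μ : G → ℝ) (g : G) :
    (Fintype.card G : ℝ) * μ g ≤ ∑ χ : G →* ℂ, ‖fourierTransform μ χ‖ := by
  have key : ∑ χ : G →* ℂ, χ g * fourierTransform μ χ = (Fintype.card G : ℂ) * (μ g : ℂ) := by
    calc ∑ χ : G →* ℂ, χ g * fourierTransform μ χ
        = ∑ χ : G →* ℂ, ∑ h : G, χ (g * h⁻¹) * (μ h : ℂ) := by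
          refine Finset.sum_congr rfl fun χ _ => ?_
          rw [fourierTransform, Finset.mul_sum]
          refine Finset.sum_congr rfl fun h _ => ?_
          rw [char_conj, ← mul_assoc, ← map_mul]
      _ = ∑ h : G, (∑ χ : G →* ℂ, χ (g * h⁻¹)) * (μ h : ℂ) := by
          rw [Finset.sum_comm]
          simp [Finset.sum_mul]
      _ = (Fintype.card G : ℂ) * (μ g : ℂ) := by
          simp only [sum_chars]
          rw [Finset.sum_eq_single g (fun h _ hh => by
                have hne : ¬ (g * h⁻¹ = 1) := fun hc => hh (mul_inv_eq_one.mp hc).symm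
                simp [hne])
              (by simp)]
          simp
  have h1 : (Fintype.card G : ℝ) * μ g ≤ ‖∑ χ : G →* ℂ, χ g * fourierTransform μ χ‖ := by
    rw [key]
    calc (Fintype.card G : ℝ) * μ g ≤ |(Fintype.card G : ℝ) * μ g| := le_abs_self _
      _ = ‖((Fintype.card G : ℝ) * μ g : ℝ)‖ := (Real.norm_eq_abs _).symm
      _ = ‖(Fintype.card G : ℂ) * (μ g : ℂ)‖ := by
          rw [← Complex.norm_real]; push_cast; ring_nf
  refine h1.trans ((norm_sum_le _ _).trans ?_)
  refine le_of_eq (Finset.sum_congr rfl fun χ _ => ?_)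
  rw [norm_mul, char_norm_one, one_mul]

end Chars

section Comb
variable {N : ℕ}

lemma sum_card_blocks (B : Finset (Finset (Fin N)))
    (hdisj : ∀ A ∈ B, ∀ A' ∈ B, A ≠ A' → Disjoint A A')
    (hsup : B.sup id = Finset.univ) : ∑ A ∈ B, A.card = N := by
  have h1 : B.sup id = B.biUnion id := Finset.sup_eq_biUnion _ _
  have h2 : (B.biUnion id).card = ∑ A ∈ B, A.card :=
    Finset.card_biUnion (fun A hA A' hA' h => hdisj A hA A' hA' h)
  rw [← h2, ← h1, hsup, Finset.card_univ, Fintype.card_fin]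

lemma exists_refinement (n : ℕ) (hnN : n ≤ N) : ∀ (k : ℕ) (B : Finset (Finset (Fin N))),
    (∀ A ∈ B, A.Nonempty) → (∀ A ∈ B, ∀ A' ∈ B, A ≠ A' → Disjoint A A') →
    B.sup id = Finset.univ → n = B.card + k →
    ∃ B' : Finset (Finset (Fin N)), B'.card = n ∧ (∀ A ∈ B', A.Nonempty) ∧
      (∀ A ∈ B', ∀ A' ∈ B', A ≠ A' → Disjoint A A') ∧ B'.sup id = Finset.univ ∧
      ∀ A' ∈ B', ∃ A ∈ B, A' ⊆ A := by
  intro k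
  induction k with
  | zero =>
    intro B h1 h2 h3 h4
    exact ⟨B, by omega, h1, h2, h3, fun A hA => ⟨A, hA, subset_rfl⟩⟩
  | succ k ih =>
    intro B h1 h2 h3 h4
    have hcard : ∑ A ∈ B, A.card = N := sum_card_blocks B h2 h3
    have hbig : ∃ A ∈ B, 2 ≤ A.card := by
      by_contra hno
      push_neg at hno
      have hone : ∀ A ∈ B, A.card = 1 := fun A hA =>
        le_antisymm (by have := hno A hA; omega) (Finset.card_pos.mpr (h1 A hA))
      have : ∑ A ∈ B, A.card = B.card := by
        rw [Finset.sum_congr rfl hone, Finset.sum_const, smul_eq_mul, mul_one]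
      omega
    obtain ⟨A, hAB, hA2⟩ := hbig
    obtain ⟨a, ha⟩ := (h1 A hAB)
    set A1 : Finset (Fin N) := {a} with hA1def
    set A2 := A.erase a with hA2def
    have hA2card : A2.card = A.card - 1 := Finset.card_erase_of_mem ha
    have hA2ne : A2.Nonempty := by rw [← Finset.card_pos]; omega
    have hA1A : A1 ⊆ A := Finset.singleton_subset_iff.mpr ha
    have hA2A : A2 ⊆ A := Finset.erase_subset _ _
    have hA1card : A1.card = 1 := Finset.card_singleton a
    have hA12 : A1 ≠ A2 := by
      intro h
      have h' : a ∈ A1 := Finset.mem_singleton_self a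
      rw [h] at h'
      exact Finset.notMem_erase a A h'
    have hdisj12 : Disjoint A1 A2 :=
      Finset.disjoint_singleton_left.mpr (Finset.notMem_erase a A)
    have hA1ne : A1 ≠ A := fun h => by rw [← h, hA1card] at hA2; omega
    have hA2neA : A2 ≠ A := fun h => Finset.notMem_erase a A (by rw [hA2def] at h; rw [h]; exact ha)
    have hA1nB : A1 ∉ B.erase A := by
      intro hmem
      have h' := h2 A1 (Finset.mem_of_mem_erase hmem) A hAB hA1ne
      exact (Finset.disjoint_left.mp h' (Finset.mem_singleton_self a)) ha
    have hA2nB : A2 ∉ B.erase A := by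
      intro hmem
      have h' := h2 A2 (Finset.mem_of_mem_erase hmem) A hAB hA2neA
      obtain ⟨b, hb⟩ := hA2ne
      exact (Finset.disjoint_left.mp h' hb) (hA2A hb)
    set B' := insert A1 (insert A2 (B.erase A)) with hB'def
    have hcardB' : B'.card = B.card + 1 := by
      rw [hB'def, Finset.card_insert_of_notMem (by
          simp only [Finset.mem_insert]
          rintro (h | h); exact hA12 h; exact hA1nB h),
        Finset.card_insert_of_notMem hA2nB, Finset.card_erase_of_mem hAB]
      have : 1 ≤ B.card := Finset.card_pos.mpr ⟨A, hAB⟩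
      omega
    have hmemB' : ∀ X ∈ B', X = A1 ∨ X = A2 ∨ (X ∈ B ∧ X ≠ A) := by
      intro X hX
      simp only [hB'def, Finset.mem_insert, Finset.mem_erase] at hX
      tauto
    have hsubB' : ∀ X ∈ B', X ⊆ A ∨ (X ∈ B ∧ X ≠ A) := by
      intro X hX
      rcases hmemB' X hX with h | h | h
      · exact Or.inl (h ▸ hA1A)
      · exact Or.inl (h ▸ hA2A)
      · exact Or.inr h
    have hne' : ∀ X ∈ B', X.Nonempty := by
      intro X hX
      rcases hmemB' X hX with h | h | h
      · exact h ▸ Finset.singleton_nonempty a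
      · exact h ▸ hA2ne
      · exact h1 X h.1
    have hdisj' : ∀ X ∈ B', ∀ Y ∈ B', X ≠ Y → Disjoint X Y := by
      intro X hX Y hY hXY
      rcases hmemB' X hX with hx | hx | hx <;> rcases hmemB' Y hY with hy | hy | hy
      · exact absurd (hx.trans hy.symm) hXY
      · exact hx ▸ hy ▸ hdisj12
      · exact Finset.disjoint_of_subset_left (hx ▸ hA1A) (h2 A hAB Y hy.1 (Ne.symm hy.2))
      · exact hx ▸ hy ▸ hdisj12.symm
      · exact absurd (hx.trans hy.symm) hXY
      · exact Finset.disjoint_of_subset_left (hx ▸ hA2A) (h2 A hAB Y hy.1 (Ne.symm hy.2))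
      · exact Finset.disjoint_of_subset_right (hy ▸ hA1A) (h2 X hx.1 A hAB hx.2)
      · exact Finset.disjoint_of_subset_right (hy ▸ hA2A) (h2 X hx.1 A hAB hx.2)
      · exact h2 X hx.1 Y hy.1 hXY
    have hsup' : B'.sup id = Finset.univ := by
      have h12 : A1 ⊔ A2 = A := by
        rw [hA1def, hA2def]
        ext i
        simp only [Finset.sup_eq_union, Finset.mem_union, Finset.mem_singleton,
          Finset.mem_erase]
        constructor
        · rintro (h | h)
          · exact h ▸ ha
          · exact h.2
        · intro h
          by_cases hia : i = a
          · exact Or.inl hia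
          · exact Or.inr ⟨hia, h⟩
      rw [hB'def, Finset.sup_insert, Finset.sup_insert, ← sup_assoc, id, id, h12]
      rw [show A ⊔ (B.erase A).sup id = (insert A (B.erase A)).sup id from
        (Finset.sup_insert).symm, Finset.insert_erase hAB, h3]
    have hstep : n = B'.card + k := by omega
    obtain ⟨B'', hc, hne'', hd'', hs'', href⟩ := ih B' hne' hdisj' hsup' hstep
    refine ⟨B'', hc, hne'', hd'', hs'', fun X hX => ?_⟩
    obtain ⟨Y, hY, hXY⟩ := href X hX
    rcases hsubB' Y hY with h | h
    · exact ⟨A, hAB, hXY.trans h⟩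
    · exact ⟨Y, h.1, hXY⟩

lemma exists_partition {α : Type*} (n : ℕ) (hnN : n ≤ N) (x : Fin N → α)
    (hx : (Finset.univ.image x).card ≤ n) :
    ∃ B : Finset (Finset (Fin N)), B.card = n ∧ (∀ A ∈ B, A.Nonempty) ∧
      (∀ A ∈ B, ∀ A' ∈ B, A ≠ A' → Disjoint A A') ∧ B.sup id = Finset.univ ∧
      ∀ A ∈ B, ∀ i ∈ A, ∀ j ∈ A, x i = x j := by
  classical
  set B0 := (Finset.univ.image x).image
    (fun v => Finset.univ.filter (fun i => x i = v)) with hB0def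
  have hmem : ∀ A ∈ B0, ∃ v, A = Finset.univ.filter (fun i => x i = v) := by
    intro A hA
    obtain ⟨v, _, hv⟩ := Finset.mem_image.mp hA
    exact ⟨v, hv.symm⟩
  have hne : ∀ A ∈ B0, A.Nonempty := by
    intro A hA
    obtain ⟨v, hv, hveq⟩ := Finset.mem_image.mp hA
    obtain ⟨i, _, hi⟩ := Finset.mem_image.mp hv
    exact ⟨i, hveq ▸ Finset.mem_filter.mpr ⟨Finset.mem_univ i, hi⟩⟩
  have hdisj : ∀ A ∈ B0, ∀ A' ∈ B0, A ≠ A' → Disjoint A A' := by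
    intro A hA A' hA' hne'
    obtain ⟨v, rfl⟩ := hmem A hA
    obtain ⟨v', rfl⟩ := hmem A' hA'
    refine Finset.disjoint_left.mpr fun i hi hi' => ?_
    have h1 := (Finset.mem_filter.mp hi).2
    have h2 := (Finset.mem_filter.mp hi').2
    exact hne' (by rw [h1.symm.trans h2])
  have hsup : B0.sup id = Finset.univ := by
    ext i
    simp only [Finset.mem_sup, id, Finset.mem_univ, iff_true]
    exact ⟨Finset.univ.filter (fun j => x j = x i),
      Finset.mem_image.mpr ⟨x i, Finset.mem_image.mpr ⟨i, Finset.mem_univ i, rfl⟩, rfl⟩,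
      Finset.mem_filter.mpr ⟨Finset.mem_univ i, rfl⟩⟩
  have hcard : B0.card ≤ n := (Finset.card_image_le).trans hx
  obtain ⟨B, hc, hne', hd', hs', href⟩ :=
    exists_refinement n hnN (n - B0.card) B0 hne hdisj hsup (by omega)
  refine ⟨B, hc, hne', hd', hs', fun A hA i hi j hj => ?_⟩
  obtain ⟨A0, hA0, hsub⟩ := href A hA
  obtain ⟨v, rfl⟩ := hmem A0 hA0
  have h1 := (Finset.mem_filter.mp (hsub hi)).2
  have h2 := (Finset.mem_filter.mp (hsub hj)).2
  rw [h1, h2]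

end Comb

section Main
variable {G : Type*} [CommGroup G] [Fintype G]

lemma partition_bound {N : ℕ} (hN : 0 < N) (μ : G → ℝ) (hμ0 : ∀ g, 0 ≤ μ g)
    (hμ1 : ∑ g : G, μ g = 1) (s : Fin N → G) (t : ℝ) (ht0 : 0 ≤ t) (htμ : ∀ g, μ g ≤ t)
    (n m : ℕ) (hNm : N = n + m)
    (B : Finset (Finset (Fin N))) (hc : B.card = n) (hne : ∀ A ∈ B, A.Nonempty)
    (hd : ∀ A ∈ B, ∀ A' ∈ B, A ≠ A' → Disjoint A A') (hs : B.sup id = Finset.univ) :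
    ∑ x : Fin N → G,
      (if (∀ A ∈ B, ∀ i ∈ A, ∀ j ∈ A, x i = x j) then ∏ i, μ (s i * x i) else 0) ≤ t ^ m := by
  classical
  set rep : Finset (Fin N) → Fin N := fun A => if h : A.Nonempty then h.choose else ⟨0, hN⟩
    with hrepdef
  have hrep : ∀ A ∈ B, rep A ∈ A := by
    intro A hA
    rw [hrepdef]
    simp only [dif_pos (hne A hA)]
    exact (hne A hA).choose_spec
  have hpd : (↑B : Set (Finset (Fin N))).PairwiseDisjoint id :=
    fun A hA A' hA' h => hd A hA A' hA' h
  have hsummem : ∀ i : Fin N, ∃ A ∈ B, i ∈ A := by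
    intro i
    have : i ∈ B.sup id := hs ▸ Finset.mem_univ i
    simpa using Finset.mem_sup.mp this
  have hm : ∑ A ∈ B, (A.card - 1) = m := by
    have h1 : ∑ A ∈ B, A.card = N := sum_card_blocks B hd hs
    have h2 : ∑ A ∈ B, (A.card - 1) + B.card = ∑ A ∈ B, A.card := by
      rw [Finset.card_eq_sum_ones, ← Finset.sum_add_distrib]
      refine Finset.sum_congr rfl fun A hA => ?_
      have := Finset.card_pos.mpr (hne A hA)
      omega
    omega
  rw [← Finset.sum_filter]
  set T := Finset.univ.filter
    (fun x : Fin N → G => ∀ A ∈ B, ∀ i ∈ A, ∀ j ∈ A, x i = x j) with hTdef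
  have hconst : ∀ x ∈ T, ∀ A ∈ B, ∀ i ∈ A, x i = x (rep A) := by
    intro x hx A hA i hi
    have := (Finset.mem_filter.mp hx).2
    exact this A hA i hi (rep A) (hrep A hA)
  -- pointwise bound
  have hpoint : ∀ x ∈ T,
      ∏ i, μ (s i * x i) ≤ (∏ A ∈ B, μ (s (rep A) * x (rep A))) * t ^ m := by
    intro x hx
    have hsplit : ∏ i, μ (s i * x i) = ∏ A ∈ B, ∏ i ∈ A, μ (s i * x i) := by
      rw [show (Finset.univ : Finset (Fin N)) = B.biUnion id by
          rw [← Finset.sup_eq_biUnion, hs]]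
      exact Finset.prod_biUnion hpd
    rw [hsplit]
    have hblock : ∀ A ∈ B,
        ∏ i ∈ A, μ (s i * x i) ≤ μ (s (rep A) * x (rep A)) * t ^ (A.card - 1) := by
      intro A hA
      rw [← Finset.mul_prod_erase A _ (hrep A hA)]
      refine mul_le_mul_of_nonneg_left ?_ (hμ0 _)
      calc ∏ i ∈ A.erase (rep A), μ (s i * x i)
          ≤ ∏ _i ∈ A.erase (rep A), t :=
            Finset.prod_le_prod (fun i _ => hμ0 _) (fun i _ => htμ _)
        _ = t ^ (A.card - 1) := by
            rw [Finset.prod_const, Finset.card_erase_of_mem (hrep A hA)]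
    calc ∏ A ∈ B, ∏ i ∈ A, μ (s i * x i)
        ≤ ∏ A ∈ B, μ (s (rep A) * x (rep A)) * t ^ (A.card - 1) :=
          Finset.prod_le_prod (fun A hA => Finset.prod_nonneg fun i _ => hμ0 _)
            (fun A hA => hblock A hA)
      _ = (∏ A ∈ B, μ (s (rep A) * x (rep A))) * t ^ (∑ A ∈ B, (A.card - 1)) := by
          rw [Finset.prod_mul_distrib, Finset.prod_pow_eq_pow_sum]
      _ = (∏ A ∈ B, μ (s (rep A) * x (rep A))) * t ^ m := by rw [hm]
  -- sum of representative products ≤ 1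
  have hsum1 : ∑ x ∈ T, ∏ A ∈ B, μ (s (rep A) * x (rep A)) ≤ 1 := by
    set f : (Fin N → G) → ({A // A ∈ B} → G) := fun x A => x (rep A.1) with hfdef
    have hinj : ∀ x ∈ T, ∀ y ∈ T, f x = f y → x = y := by
      intro x hx y hy hxy
      funext i
      obtain ⟨A, hA, hiA⟩ := hsummem i
      have h1 : x i = x (rep A) := hconst x hx A hA i hiA
      have h2 : y i = y (rep A) := hconst y hy A hA i hiA
      have h3 : x (rep A) = y (rep A) := congrFun hxy ⟨A, hA⟩
      rw [h1, h3, ← h2]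
    have step1 : ∀ x : Fin N → G,
        ∏ A ∈ B, μ (s (rep A) * x (rep A)) =
          ∏ A : {A // A ∈ B}, μ (s (rep A.1) * f x A) := by
      intro x
      rw [← Finset.prod_attach B (fun A => μ (s (rep A) * x (rep A))), Finset.univ_eq_attach]
    calc ∑ x ∈ T, ∏ A ∈ B, μ (s (rep A) * x (rep A))
        = ∑ x ∈ T, ∏ A : {A // A ∈ B}, μ (s (rep A.1) * f x A) := by
          exact Finset.sum_congr rfl fun x _ => step1 x
      _ = ∑ y ∈ T.image f, ∏ A : {A // A ∈ B}, μ (s (rep A.1) * y A) := by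
          have himg : ∑ y ∈ T.image f, (∏ A : {A // A ∈ B}, μ (s (rep A.1) * y A)) =
              ∑ x ∈ T, ∏ A : {A // A ∈ B}, μ (s (rep A.1) * f x A) :=
            Finset.sum_image hinj
          exact himg.symm
      _ ≤ ∑ y : {A // A ∈ B} → G, ∏ A : {A // A ∈ B}, μ (s (rep A.1) * y A) :=
          Finset.sum_le_sum_of_subset_of_nonneg (Finset.subset_univ _)
            (fun y _ _ => Finset.prod_nonneg fun A _ => hμ0 _)
      _ = ∏ A : {A // A ∈ B}, ∑ g : G, μ (s (rep A.1) * g) := by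
          rw [Finset.prod_univ_sum]
          simp [Fintype.piFinset_univ]
      _ = ∏ A : {A // A ∈ B}, (1 : ℝ) := by
          refine Finset.prod_congr rfl fun A _ => ?_
          rw [show ∑ g : G, μ (s (rep A.1) * g) = ∑ g : G, μ g from
            Equiv.sum_comp (Equiv.mulLeft (s (rep A.1))) μ, hμ1]
      _ = 1 := Finset.prod_const_one
  calc ∑ x ∈ T, ∏ i, μ (s i * x i)
      ≤ ∑ x ∈ T, (∏ A ∈ B, μ (s (rep A) * x (rep A))) * t ^ m :=
        Finset.sum_le_sum hpoint
    _ = (∑ x ∈ T, ∏ A ∈ B, μ (s (rep A) * x (rep A))) * t ^ m := by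
        rw [Finset.sum_mul]
    _ ≤ 1 * t ^ m := mul_le_mul_of_nonneg_right hsum1 (pow_nonneg ht0 m)
    _ = t ^ m := one_mul _

end Main


/-- The number of partitions of `{1, …, N}` into exactly `n` non-empty pairwise
disjoint blocks. -/
noncomputable def numPartitions (N n : ℕ) : ℕ :=
  (Finset.univ.filter fun B : Finset (Finset (Fin N)) =>
    B.card = n ∧ (∀ A ∈ B, A.Nonempty) ∧
      (∀ A ∈ B, ∀ A' ∈ B, A ≠ A' → Disjoint A A') ∧ B.sup id = Finset.univ).card

set_option maxHeartbeats 1000000 in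
/-- Let `G` be a finite abelian group, `μ` a probability measure on `G` and
`μ i (x) = μ (s i * x)` its translates. The probability `P` that `n + m` independent
random variables with laws `μ i` take at most `n` distinct values satisfies
`P ≤ C(n,m) ((∑_χ |μ̂ χ|)/|G|)^m`, where `C(n,m)` is the number of partitions of
`{1, …, n+m}` into exactly `n` non-empty blocks. (The character sum is a `tsum`; the
type `G →* ℂ` of characters is finite, so it is the finite sum over all characters.) -/
theorem stmt18 {G : Type*} [CommGroup G] [Fintype G] (n m : ℕ) (hn : 0 < n) (hm : 0 < m)
    (μ : G → ℝ) (hμ0 : ∀ g, 0 ≤ μ g) (hμ1 : ∑ g : G, μ g = 1) (s : Fin (n + m) → G) :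
    (∑ x : Fin (n + m) → G,
        if (Finset.univ.image x).card ≤ n then ∏ i, μ (s i * x i) else 0) ≤
      (numPartitions (n + m) n : ℝ) *
        ((∑' χ : G →* ℂ, ‖fourierTransform μ χ‖) / (Fintype.card G : ℝ)) ^ m := by
  classical
  have hnN : n ≤ n + m := Nat.le_add_right n m
  have hN : 0 < n + m := by omega
  rw [show (∑' χ : G →* ℂ, ‖fourierTransform μ χ‖) =
      ∑ χ : G →* ℂ, ‖fourierTransform μ χ‖ from tsum_fintype _]
  set S := ∑ χ : G →* ℂ, ‖fourierTransform μ χ‖ with hSdef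
  set t := S / (Fintype.card G : ℝ) with htdef
  have hcardpos : (0:ℝ) < Fintype.card G := by exact_mod_cast Fintype.card_pos
  have ht0 : 0 ≤ t := div_nonneg (Finset.sum_nonneg fun χ _ => norm_nonneg _) hcardpos.le
  have htμ : ∀ g, μ g ≤ t := by
    intro g
    rw [htdef, le_div_iff₀ hcardpos]
    calc μ g * (Fintype.card G : ℝ) = (Fintype.card G : ℝ) * μ g := mul_comm _ _
      _ ≤ S := mu_le_bound μ g
  set P := Finset.univ.filter (fun B : Finset (Finset (Fin (n+m))) =>
    B.card = n ∧ (∀ A ∈ B, A.Nonempty) ∧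
      (∀ A ∈ B, ∀ A' ∈ B, A ≠ A' → Disjoint A A') ∧ B.sup id = Finset.univ) with hPdef
  have hnum : numPartitions (n+m) n = P.card := rfl
  have hpoint : ∀ x : Fin (n+m) → G,
      (if (Finset.univ.image x).card ≤ n then ∏ i, μ (s i * x i) else 0) ≤
        ∑ B ∈ P, (if (∀ A ∈ B, ∀ i ∈ A, ∀ j ∈ A, x i = x j)
          then ∏ i, μ (s i * x i) else 0) := by
    intro x
    have hFnn : 0 ≤ ∏ i, μ (s i * x i) := Finset.prod_nonneg fun i _ => hμ0 _
    have hterm : ∀ B ∈ P, 0 ≤ (if (∀ A ∈ B, ∀ i ∈ A, ∀ j ∈ A, x i = x j)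
        then ∏ i, μ (s i * x i) else 0) := by
      intro B _
      split_ifs
      · exact hFnn
      · exact le_rfl
    by_cases hx : (Finset.univ.image x).card ≤ n
    · rw [if_pos hx]
      obtain ⟨B, hc, hne, hd, hs', hconst⟩ := exists_partition n hnN x hx
      have hBP : B ∈ P := Finset.mem_filter.mpr ⟨Finset.mem_univ _, hc, hne, hd, hs'⟩
      have heq : (if (∀ A ∈ B, ∀ i ∈ A, ∀ j ∈ A, x i = x j)
          then ∏ i, μ (s i * x i) else 0) = ∏ i, μ (s i * x i) :=
        if_pos (fun A hA i hi j hj => hconst A hA i hi j hj)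
      have hfin := Finset.single_le_sum hterm hBP
      rw [heq] at hfin
      exact hfin
    · rw [if_neg hx]
      exact Finset.sum_nonneg hterm
  calc ∑ x : Fin (n + m) → G,
        (if (Finset.univ.image x).card ≤ n then ∏ i, μ (s i * x i) else 0)
      ≤ ∑ x : Fin (n + m) → G, ∑ B ∈ P,
          (if (∀ A ∈ B, ∀ i ∈ A, ∀ j ∈ A, x i = x j) then ∏ i, μ (s i * x i) else 0) :=
        Finset.sum_le_sum fun x _ => hpoint x
    _ = ∑ B ∈ P, ∑ x : Fin (n + m) → G,
          (if (∀ A ∈ B, ∀ i ∈ A, ∀ j ∈ A, x i = x j) then ∏ i, μ (s i * x i) else 0) :=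
        Finset.sum_comm
    _ ≤ ∑ _B ∈ P, t ^ m := by
        refine Finset.sum_le_sum fun B hB => ?_
        obtain ⟨_, hc, hne, hd, hs'⟩ := Finset.mem_filter.mp hB
        exact partition_bound hN μ hμ0 hμ1 s t ht0 htμ n m rfl B hc hne hd hs'
    _ = (P.card : ℝ) * t ^ m := by rw [Finset.sum_const, nsmul_eq_mul]
    _ = (numPartitions (n+m) n : ℝ) * t ^ m := by rw [hnum]
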